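/- Let σ be a mixed strategy on A such that for every player i ∈ [n], either exactly one action in A_i is σ-supported, or there exist two σ-supported actions j, k ∈ A_i with j ≠ k and σ_{ij} ≠ σ_{ik}. Then σ is a strict coarse correlated equilibrium (sCCE) for the witness utility w, i.e., for every player i and every m ∈ A_i with p_{im} < 1, ∑_{a ∈ A} σ(a) (w_i(a) − w_i(m, a_{-i})) > 0. -/

import Mathlib

open scoped BigOperators

section Prelim

variable {n : ℕ}

/-- Joint action obtained from player `i`'s action `j` and the other players' actions `b`,
i.e. the joint action `(j, a_{-i})`. -/
def joinA {A : Fin n → Type*} (i : Fin n) (j : A i)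
    (b : ∀ l : {l : Fin n // l ≠ i}, A l) : ∀ l, A l :=
  fun l => if h : l = i then h.symm ▸ j else b ⟨l, h⟩

/-- The actions `a_{-i}` of all players other than `i` in the joint action `a`. -/
def restr {A : Fin n → Type*} (i : Fin n) (a : ∀ l, A l) :
    ∀ l : {l : Fin n // l ≠ i}, A l :=
  fun l => a l

/-- `σ` is a mixed strategy: nonnegative and sums to one. -/
def IsMixed {X : Type*} [Fintype X] (σ : X → ℝ) : Prop :=
  (∀ x, 0 ≤ σ x) ∧ ∑ x, σ x = 1

/-- Marginal probability `p_{ij}` that player `i` plays `j` under `σ`. -/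
noncomputable def marg {A : Fin n → Type*} [∀ l, Fintype (A l)]
    (σ : (∀ l, A l) → ℝ) (i : Fin n) (j : A i) : ℝ :=
  ∑ b : ∀ l : {l : Fin n // l ≠ i}, A l, σ (joinA i j b)

/-- Conditional distribution `σ_{ij}` over the other players' actions:
`σ_{ij}(a_{-i}) = σ(j, a_{-i}) / p_{ij}` if `p_{ij} > 0`, and the zero function otherwise. -/
noncomputable def condl {A : Fin n → Type*} [∀ l, Fintype (A l)]
    (σ : (∀ l, A l) → ℝ) (i : Fin n) (j : A i) :
    (∀ l : {l : Fin n // l ≠ i}, A l) → ℝ :=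
  fun b => if 0 < marg σ i j then σ (joinA i j b) / marg σ i j else 0

/-- Euclidean norm `‖·‖₂` on `ℝ^X`. -/
noncomputable def norm2 {X : Type*} [Fintype X] (f : X → ℝ) : ℝ :=
  Real.sqrt (∑ x, f x ^ 2)

/-- Euclidean inner product `⟨·,·⟩` on `ℝ^X`. -/
noncomputable def inner2 {X : Type*} [Fintype X] (f g : X → ℝ) : ℝ :=
  ∑ x, f x * g x

/-- The witness utility `w_i(j, a_{-i}) = σ_{ij}(a_{-i}) / ‖σ_{ij}‖₂` if `p_{ij} > 0`,
and `0` otherwise. -/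
noncomputable def wit {A : Fin n → Type*} [∀ l, Fintype (A l)]
    (σ : (∀ l, A l) → ℝ) (i : Fin n) (a : ∀ l, A l) : ℝ :=
  if 0 < marg σ i (a i) then condl σ i (a i) (restr i a) / norm2 (condl σ i (a i)) else 0

open Classical in
/-- `t_{ijk} = ‖σ_{ij}‖₂ - ⟨σ_{ij}, σ_{ik}⟩ / ‖σ_{ik}‖₂` if `σ_{ik} ≠ 0`,
and `t_{ijk} = ‖σ_{ij}‖₂` if `σ_{ik} = 0`. -/
noncomputable def tq {A : Fin n → Type*} [∀ l, Fintype (A l)]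
    (σ : (∀ l, A l) → ℝ) (i : Fin n) (j k : A i) : ℝ :=
  if condl σ i k = 0 then norm2 (condl σ i j)
  else norm2 (condl σ i j) - inner2 (condl σ i j) (condl σ i k) / norm2 (condl σ i k)

end Prelim

/-! Write `σ(j, a₋ᵢ) = p_{ij} σ_{ij}(a₋ᵢ)`. Grouping the joint actions by player `i`'s coordinate
turns the gain `∑ₐ σ(a) (wᵢ(a) - wᵢ(m, a₋ᵢ))` into `∑ⱼ p_{ij} t_{ijm}`, where
`t_{ijm} = ‖σ_{ij}‖₂ - ⟨σ_{ij}, σ_{im}⟩ / ‖σ_{im}‖₂ ≥ 0` by Cauchy–Schwarz. Equality in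
Cauchy–Schwarz makes `σ_{ij}` and `σ_{im}` proportional, hence equal, as both sum to one. So it
suffices to find a supported `j` with `σ_{ij} ≠ σ_{im}`: the second alternative of the hypothesis
gives two distinct conditionals, one of which differs from `σ_{im}`; in the first alternative
`p_{im} < 1` forces `m` to be unsupported, so `σ_{im} = 0`. -/

section Euclidean

variable {X : Type*} [Fintype X]

lemma norm2_eq_norm_toLp (f : X → ℝ) : norm2 f = ‖WithLp.toLp 2 f‖ := by
  simp [norm2, EuclideanSpace.norm_eq]

lemma inner2_eq_inner_toLp (f g : X → ℝ) :
    inner2 f g = inner ℝ (WithLp.toLp 2 f) (WithLp.toLp 2 g) := by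
  simp [inner2, PiLp.inner_apply, mul_comm]

lemma norm2_nonneg (f : X → ℝ) : 0 ≤ norm2 f := Real.sqrt_nonneg _

lemma norm2_mul_self (f : X → ℝ) : norm2 f * norm2 f = ∑ x, f x * f x := by
  rw [norm2, Real.mul_self_sqrt (by positivity)]
  simp only [sq]

lemma norm2_pos_of_sum_eq_one {f : X → ℝ} (hf : ∑ x, f x = 1) : 0 < norm2 f := by
  rw [norm2_eq_norm_toLp, norm_pos_iff]
  rintro h
  simp [(WithLp.toLp_eq_zero 2).1 h] at hf

lemma inner2_div_norm2_le (f g : X → ℝ) : inner2 f g / norm2 g ≤ norm2 f := by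
  refine div_le_of_le_mul₀ (norm2_nonneg g) (norm2_nonneg f) ?_
  rw [inner2_eq_inner_toLp, norm2_eq_norm_toLp, norm2_eq_norm_toLp]
  exact real_inner_le_norm _ _

lemma inner2_lt_norm2_mul_norm2 {f g : X → ℝ} (hf : ∑ x, f x = 1) (hg : ∑ x, g x = 1)
    (hfg : f ≠ g) : inner2 f g < norm2 f * norm2 g := by
  have hf_pos := norm2_pos_of_sum_eq_one hf
  rw [inner2_eq_inner_toLp, norm2_eq_norm_toLp f, norm2_eq_norm_toLp g,
    inner_lt_norm_mul_iff_real, ← norm2_eq_norm_toLp, ← norm2_eq_norm_toLp]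
  intro h
  have hpt : ∀ x, norm2 g * f x = norm2 f * g x := fun x => congrArg (fun v => v x) h
  have hnorm : norm2 g = norm2 f := by
    have hsum := Finset.sum_congr (s₁ := Finset.univ) rfl fun x _ => hpt x
    rwa [← Finset.mul_sum, ← Finset.mul_sum, hf, hg, mul_one, mul_one] at hsum
  exact hfg <| funext fun x => mul_left_cancel₀ hf_pos.ne' (hnorm ▸ hpt x)

lemma inner2_div_norm2_lt {f g : X → ℝ} (hf : ∑ x, f x = 1) (hg : ∑ x, g x = 1)
    (hfg : f ≠ g) : inner2 f g / norm2 g < norm2 f :=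
  (div_lt_iff₀ (norm2_pos_of_sum_eq_one hg)).2 (inner2_lt_norm2_mul_norm2 hf hg hfg)

end Euclidean

section Game

variable {n : ℕ} {A : Fin n → Type*}

@[simp]
lemma joinA_apply_self (i : Fin n) (j : A i) (b : ∀ l : {l : Fin n // l ≠ i}, A l) :
    joinA i j b i = j := by
  simp [joinA]

@[simp]
lemma restr_joinA (i : Fin n) (j : A i) (b : ∀ l : {l : Fin n // l ≠ i}, A l) :
    restr i (joinA i j b) = b :=
  funext fun l => dif_neg l.2

variable [∀ l, Fintype (A l)]

lemma sum_eq_sum_sum_joinA (i : Fin n) (F : (∀ l, A l) → ℝ) :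
    ∑ a, F a = ∑ j : A i, ∑ b, F (joinA i j b) := by
  rw [← (Equiv.piSplitAt i A).symm.sum_comp, Fintype.sum_prod_type]
  rfl

variable {σ : (∀ l, A l) → ℝ} {i : Fin n}

lemma marg_nonneg (hσ : ∀ a, 0 ≤ σ a) (j : A i) : 0 ≤ marg σ i j :=
  Finset.sum_nonneg fun _ _ => hσ _

lemma marg_eq_one_of_unique (hσ : IsMixed σ) {j : A i}
    (huniq : ∀ k, 0 < marg σ i k → k = j) : marg σ i j = 1 := by
  rw [← hσ.2, sum_eq_sum_sum_joinA i]
  refine (Finset.sum_eq_single j (fun k _ hkj => ?_) (by simp)).symm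
  exact le_antisymm (not_lt.1 fun hk => hkj (huniq k hk)) (marg_nonneg hσ.1 k)

lemma sum_condl (hj : 0 < marg σ i j) : ∑ b, condl σ i j b = 1 := by
  simp only [condl, if_pos hj, ← Finset.sum_div]
  exact div_self hj.ne'

lemma condl_eq_zero (hj : ¬ 0 < marg σ i j) : condl σ i j = 0 :=
  funext fun _ => if_neg hj

lemma marg_mul_condl (hσ : ∀ a, 0 ≤ σ a) (j : A i) (b : ∀ l : {l : Fin n // l ≠ i}, A l) :
    marg σ i j * condl σ i j b = σ (joinA i j b) := by
  by_cases hj : 0 < marg σ i j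
  · rw [condl, if_pos hj, mul_div_cancel₀ _ hj.ne']
  · have hzero : marg σ i j = 0 := le_antisymm (not_lt.1 hj) (marg_nonneg hσ j)
    rw [hzero, zero_mul, eq_comm]
    exact (Finset.sum_eq_zero_iff_of_nonneg fun _ _ => hσ _).1 hzero b (Finset.mem_univ _)

-- Since `x / 0 = 0`, the unsupported cases of `wit` and `tq` need no separate treatment.
lemma wit_eq (σ : (∀ l, A l) → ℝ) (i : Fin n) (a : ∀ l, A l) :
    wit σ i a = condl σ i (a i) (restr i a) / norm2 (condl σ i (a i)) := by
  unfold wit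
  split_ifs with h
  · rfl
  · simp [condl_eq_zero h]

lemma tq_eq (σ : (∀ l, A l) → ℝ) (i : Fin n) (j k : A i) :
    tq σ i j k = norm2 (condl σ i j) - inner2 (condl σ i j) (condl σ i k) / norm2 (condl σ i k) := by
  unfold tq
  split_ifs with h
  · simp [h, norm2]
  · rfl

lemma tq_nonneg (σ : (∀ l, A l) → ℝ) (i : Fin n) (j k : A i) : 0 ≤ tq σ i j k := by
  rw [tq_eq, sub_nonneg]
  exact inner2_div_norm2_le _ _

lemma tq_pos {j k : A i} (hj : 0 < marg σ i j) (hjk : condl σ i j ≠ condl σ i k) :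
    0 < tq σ i j k := by
  rw [tq_eq, sub_pos]
  by_cases hk : 0 < marg σ i k
  · exact inner2_div_norm2_lt (sum_condl hj) (sum_condl hk) hjk
  · rw [condl_eq_zero hk]
    simpa [inner2] using norm2_pos_of_sum_eq_one (sum_condl hj)

lemma sum_mul_wit_sub_eq_sum_marg_mul_tq (hσ : ∀ a, 0 ≤ σ a) (m : A i) :
    ∑ a, σ a * (wit σ i a - wit σ i (joinA i m (restr i a))) =
      ∑ j, marg σ i j * tq σ i j m := by
  rw [sum_eq_sum_sum_joinA i]
  refine Finset.sum_congr rfl fun j _ => ?_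
  set c := condl σ i j
  set d := condl σ i m
  calc ∑ b, σ (joinA i j b) * (wit σ i (joinA i j b) - wit σ i (joinA i m (restr i (joinA i j b))))
      = ∑ b, marg σ i j * (c b * c b / norm2 c - c b * d b / norm2 d) :=
        Finset.sum_congr rfl fun b _ => by
          rw [← marg_mul_condl hσ, wit_eq, wit_eq]
          simp only [joinA_apply_self, restr_joinA]
          ring
    _ = marg σ i j * (∑ b, c b * c b / norm2 c - inner2 c d / norm2 d) := by
        rw [← Finset.mul_sum, Finset.sum_sub_distrib, ← Finset.sum_div (f := fun b => c b * d b)]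
        rfl
    _ = marg σ i j * tq σ i j m := by
        rw [← Finset.sum_div, ← norm2_mul_self, mul_self_div_self, tq_eq]

lemma exists_marg_pos_condl_ne (hσ : IsMixed σ)
    (hc : (∃! j : A i, 0 < marg σ i j) ∨
      (∃ j k : A i, j ≠ k ∧ 0 < marg σ i j ∧ 0 < marg σ i k ∧ condl σ i j ≠ condl σ i k))
    {m : A i} (hm : marg σ i m < 1) : ∃ j, 0 < marg σ i j ∧ condl σ i j ≠ condl σ i m := by
  rcases hc with ⟨j, hj, huniq⟩ | ⟨j, k, -, hj, hk, hjk⟩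
  · have hm_unsupported : ¬ 0 < marg σ i m := fun hm_pos => by
      obtain rfl := huniq m hm_pos
      exact hm.ne (marg_eq_one_of_unique hσ huniq)
    refine ⟨j, hj, fun h => ?_⟩
    simpa [h, condl_eq_zero hm_unsupported] using sum_condl hj
  · by_cases hjm : condl σ i j = condl σ i m
    · exact ⟨k, hk, fun hkm => hjk (hjm.trans hkm.symm)⟩
    · exact ⟨j, hj, hjm⟩

end Game

theorem sCCE_of_witness_general {n : ℕ} {A : Fin n → Type*}
    [∀ l, Fintype (A l)]
    (σ : (∀ l, A l) → ℝ) (hσ : IsMixed σ)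
    (hc : ∀ i : Fin n,
      (∃! j : A i, 0 < marg σ i j) ∨
      (∃ j k : A i, j ≠ k ∧ 0 < marg σ i j ∧ 0 < marg σ i k ∧ condl σ i j ≠ condl σ i k)) :
    ∀ i : Fin n, ∀ m : A i, marg σ i m < 1 →
      0 < ∑ a : ∀ l, A l, σ a * (wit σ i a - wit σ i (joinA i m (restr i a))) := by
  intro i m hm
  obtain ⟨j, hj, hjm⟩ := exists_marg_pos_condl_ne hσ (hc i) hm
  rw [sum_mul_wit_sub_eq_sum_marg_mul_tq hσ.1]
  exact Finset.sum_pos' (fun k _ => mul_nonneg (marg_nonneg hσ.1 k) (tq_nonneg σ i k m))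
    ⟨j, Finset.mem_univ _, mul_pos hj (tq_pos hj hjm)⟩

/-- **sCCE sufficiency via the witness utility.** If for every player `i` either exactly one
action of `A i` is `σ`-supported, or there are two `σ`-supported actions `j ≠ k` with
`σ_{ij} ≠ σ_{ik}`, then `σ` is a strict coarse correlated equilibrium for the witness
utility `w`: for every player `i` and every `m` with `p_{im} < 1`,
`∑_a σ(a) (wᵢ(a) - wᵢ(m, a_{-i})) > 0`. -/
theorem sCCE_of_witness {n : ℕ} {A : Fin n → Type*}
    [∀ l, Fintype (A l)] [∀ l, Nonempty (A l)]
    (σ : (∀ l, A l) → ℝ) (hσ : IsMixed σ)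
    (hc : ∀ i : Fin n,
      (∃! j : A i, 0 < marg σ i j) ∨
      (∃ j k : A i, j ≠ k ∧ 0 < marg σ i j ∧ 0 < marg σ i k ∧ condl σ i j ≠ condl σ i k)) :
    ∀ i : Fin n, ∀ m : A i, marg σ i m < 1 →
      0 < ∑ a : ∀ l, A l, σ a * (wit σ i a - wit σ i (joinA i m (restr i a))) :=
  sCCE_of_witness_general σ hσ hc
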